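/- arXiv:1807.10230 — 2 statements merged into one kernel-verified Lean document; each statement's English description precedes it below -/
import Mathlib

section
/- Let G be a group acting by isometries on a metric space X which contains a loxodromic isometry h (i.e. τ(h) > 0), and let H be a subgroup of G containing ⟨h⟩ as a finite index subgroup. Then for any x ∈ X and K ≥ 0, the set { g ∈ H : d(x, g·x) ≤ K } is finite. -/
/-!
Since `d(hⁿx, x)/n → τ(h) > 0`, the displacement `d(x, hⁿx)` tends to infinity, and it depends
only on `|n|`; hence only finitely many powers of `h` move `x` by at most `K`. A group `H` in
which `⟨h⟩` has finite relative index is covered by finitely many translates `r⟨h⟩`, and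
`d(x, t x) ≤ d(x, r t x) + d(x, r x)`, so this finiteness passes from `⟨h⟩` to `H`.
-/

open Filter Pointwise

section

variable {G X : Type*} [Group G]

theorem Subgroup.exists_finite_mul_of_relIndex_ne_zero {K H : Subgroup G}
    (hKH : K.relIndex H ≠ 0) : ∃ R : Set G, R.Finite ∧ (H : Set G) ⊆ R * K := by
  have : (K.subgroupOf H).FiniteIndex := ⟨hKH⟩
  refine ⟨Set.range fun q : H ⧸ K.subgroupOf H => (q.out : G), Set.finite_range _, ?_⟩
  intro g hg
  obtain ⟨k, hk⟩ := QuotientGroup.mk_out_eq_mul (K.subgroupOf H) ⟨g, hg⟩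
  refine Set.mem_mul.mpr ⟨_, ⟨(⟨g, hg⟩ : H), rfl⟩, ((k : H) : G)⁻¹, K.inv_mem k.2, ?_⟩
  simp [hk]

theorem tendsto_atTop_of_tendsto_div_natCast {u : ℕ → ℝ} {L : ℝ} (hL : 0 < L)
    (hu : Tendsto (fun n => u n / n) atTop (nhds L)) : Tendsto u atTop atTop := by
  refine (hu.pos_mul_atTop hL tendsto_natCast_atTop_atTop).congr' ?_
  filter_upwards [eventually_gt_atTop 0] with n hn
  field_simp

variable [PseudoMetricSpace X] [MulAction G X]

def MetricallyProperAt (S : Set G) (x : X) : Prop :=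
  ∀ K : ℝ, {g ∈ S | dist x (g • x) ≤ K}.Finite

variable [IsIsometricSMul G X]

theorem dist_inv_smul_right (g : G) (x : X) : dist x (g⁻¹ • x) = dist x (g • x) := by
  rw [← dist_smul g, smul_inv_smul, dist_comm]

theorem dist_zpow_smul_natAbs (h : G) (n : ℤ) (x : X) :
    dist x (h ^ n.natAbs • x) = dist x (h ^ n • x) := by
  rcases Int.natAbs_eq n with hn | hn <;> conv_rhs => rw [hn]
  · rw [zpow_natCast]
  · rw [zpow_neg, zpow_natCast, dist_inv_smul_right]

theorem dist_smul_le_dist_mul_smul_add (r t : G) (x : X) :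
    dist x (t • x) ≤ dist x ((r * t) • x) + dist x (r • x) :=
  calc dist x (t • x) = dist (r • x) ((r * t) • x) := by rw [mul_smul, dist_smul]
    _ ≤ dist (r • x) x + dist x ((r * t) • x) := dist_triangle _ _ _
    _ = dist x ((r * t) • x) + dist x (r • x) := by rw [dist_comm, add_comm]

theorem MetricallyProperAt.of_subset_mul {R S T : Set G} {x : X} (hT : MetricallyProperAt T x)
    (hR : R.Finite) (hS : S ⊆ R * T) : MetricallyProperAt S x := by
  intro K
  refine (hR.biUnion fun r _ => (hT (K + dist x (r • x))).image (r * ·)).subset ?_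
  rintro g ⟨hgS, hgK⟩
  obtain ⟨r, hr, t, ht, rfl⟩ := Set.mem_mul.mp (hS hgS)
  refine Set.mem_biUnion hr ⟨t, ⟨ht, ?_⟩, rfl⟩
  linarith [dist_smul_le_dist_mul_smul_add r t x]

theorem metricallyProperAt_zpowers {h : G} {x : X}
    (hh : Tendsto (fun n : ℕ => dist x (h ^ n • x)) atTop atTop) :
    MetricallyProperAt (Subgroup.zpowers h : Set G) x := by
  intro K
  obtain ⟨N, hN⟩ := eventually_atTop.mp (hh.eventually_gt_atTop K)
  refine ((Set.finite_Ioo (-(N : ℤ)) N).image (h ^ ·)).subset ?_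
  rintro _ ⟨⟨n, rfl⟩, hn⟩
  have : n.natAbs < N := by
    by_contra! hNn
    exact (hN _ hNn).not_ge (by rwa [dist_zpow_smul_natAbs])
  exact ⟨n, ⟨by omega, by omega⟩, rfl⟩

end

theorem stmt_5_general {G X : Type*} [Group G] [MetricSpace X] [MulAction G X]
    (hiso : ∀ g : G, Isometry (fun z : X => g • z))
    (h : G) (H : Subgroup G)
    (hindex : (Subgroup.zpowers h).relIndex H ≠ 0)
    (x : X) (L : ℝ) (hL : 0 < L)
    (hlox : Tendsto (fun n : ℕ => dist ((h ^ n) • x) x / n) atTop (nhds L))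
    (K : ℝ) :
    {g : G | g ∈ H ∧ dist x (g • x) ≤ K}.Finite := by
  have : IsIsometricSMul G X := ⟨hiso⟩
  have hpow : Tendsto (fun n : ℕ => dist x (h ^ n • x)) atTop atTop := by
    simpa only [dist_comm] using tendsto_atTop_of_tendsto_div_natCast hL hlox
  obtain ⟨R, hR, hHR⟩ := Subgroup.exists_finite_mul_of_relIndex_ne_zero hindex
  exact (metricallyProperAt_zpowers hpow).of_subset_mul hR hHR K

/-- If `h` is loxodromic (positive translation length) and `H` contains the
cyclic group `⟨h⟩` as a finite index subgroup, then the orbit of `x` under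
`H` meets any bounded set in finitely many group elements. -/
theorem stmt_5 {G X : Type*} [Group G] [MetricSpace X] [MulAction G X]
    (hiso : ∀ g : G, Isometry (fun z : X => g • z))
    (h : G) (H : Subgroup G)
    (hle : Subgroup.zpowers h ≤ H)
    (hindex : (Subgroup.zpowers h).relIndex H ≠ 0)
    (x : X) (L : ℝ) (hL : 0 < L)
    (hlox : Tendsto (fun n : ℕ => dist ((h ^ n) • x) x / n) atTop (nhds L))
    (K : ℝ) (hK : 0 ≤ K) :
    {g : G | g ∈ H ∧ dist x (g • x) ≤ K}.Finite :=
  stmt_5_general hiso h H hindex x L hL hlox K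
end

section
/- Let H be a group with an infinite cyclic subgroup ⟨t⟩ of finite index, and suppose the normal closure N of t in H is a free group. Then N is infinite cyclic and N = ⟨t⟩. -/
/-!
Since `⟨t⟩` has finite index in `H`, it has finite index in the free group `N`. A free group of
rank at least two maps onto `ℤ × ℤ`, which has no cyclic subgroup of finite index, so `N` has rank
at most one and is cyclic. Conjugation acts on a cyclic group by a power map, so every subgroup of
the cyclic normal subgroup `N` is normal in `H`; in particular `⟨t⟩` is normal and therefore
contains the normal closure `N` of `t`.
-/

open Subgroup

theorem Subgroup.not_finiteIndex_zpowers_int_prod (u : Multiplicative (ℤ × ℤ)) :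
    ¬ (zpowers u).FiniteIndex := by
  intro hfi
  set n := (zpowers u).index
  have hn : (n : ℤ) ≠ 0 := Nat.cast_ne_zero.mpr hfi.index_ne_zero
  obtain ⟨a, ha⟩ := mem_zpowers_iff.mp ((zpowers u).pow_index_mem (.ofAdd (1, 0)))
  obtain ⟨b, hb⟩ := mem_zpowers_iff.mp ((zpowers u).pow_index_mem (.ofAdd (0, 1)))
  replace ha : a • u.toAdd = ((n : ℤ), 0) := by
    simpa [Prod.ext_iff] using congrArg Multiplicative.toAdd ha
  replace hb : b • u.toAdd = (0, (n : ℤ)) := by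
    simpa [Prod.ext_iff] using congrArg Multiplicative.toAdd hb
  -- `b • (n, 0) = a • (0, n)`, and the first coordinates force `b = 0`.
  have hbn : b * n = 0 := by
    have := congrArg (b • ·) ha
    rw [smul_comm, hb] at this
    simpa using (congrArg Prod.fst this).symm
  have hb0 : b = 0 := (mul_eq_zero.mp hbn).resolve_right hn
  simp only [hb0, zero_smul, Prod.ext_iff, Prod.fst_zero, Prod.snd_zero, true_and] at hb
  exact hn hb.symm

theorem Subgroup.FiniteIndex.map_of_surjective {G G' : Type*} [Group G] [Group G']
    {K : Subgroup G} (hK : K.FiniteIndex) {f : G →* G'} (hf : Function.Surjective f) :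
    (K.map f).FiniteIndex :=
  ⟨fun h => hK.index_ne_zero (Nat.eq_zero_of_zero_dvd (h ▸ K.index_map_dvd hf))⟩

theorem Subgroup.not_finiteIndex_zpowers_of_surjective_int_prod {G : Type*} [Group G]
    {f : G →* Multiplicative (ℤ × ℤ)} (hf : Function.Surjective f) (g : G) :
    ¬ (zpowers g).FiniteIndex := fun hg =>
  not_finiteIndex_zpowers_int_prod (f g) (f.map_zpowers g ▸ hg.map_of_surjective hf)

theorem Subgroup.FiniteIndex.of_map_subtype {G : Type*} [Group G] {N : Subgroup G}
    {K : Subgroup N} (hK : (K.map N.subtype).FiniteIndex) : K.FiniteIndex :=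
  ⟨fun h => hK.index_ne_zero (by rw [index_map_subtype, h, zero_mul])⟩

theorem Subgroup.normal_of_le_of_isCyclic {G : Type*} [Group G] {K N : Subgroup G} [N.Normal]
    [IsCyclic N] (hKN : K ≤ N) : K.Normal := by
  refine ⟨fun k hk h => ?_⟩
  obtain ⟨m, hm⟩ := (MulAut.conjNormal (H := N) h).toMonoidHom.map_cyclic
  have hconj : h * k * h⁻¹ = k ^ m := by
    simpa using congrArg Subtype.val (hm ⟨k, hKN hk⟩)
  exact hconj ▸ zpow_mem hk m

namespace IsFreeGroup

variable {G : Type*} [Group G] [IsFreeGroup G]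

theorem subsingleton_generators_of_finiteIndex_zpowers (g : G) (hg : (zpowers g).FiniteIndex) :
    Subsingleton (Generators G) := by
  refine ⟨fun x y => by_contra fun hxy => ?_⟩
  classical
  let f : G →* Multiplicative (ℤ × ℤ) :=
    lift fun z => if z = x then .ofAdd (1, 0) else .ofAdd (0, 1)
  have hf : Function.Surjective f := fun u =>
    ⟨of x ^ u.toAdd.1 * of y ^ u.toAdd.2, by
      simp [f, lift_of, Ne.symm hxy, ← ofAdd_zsmul, ← ofAdd_add]⟩
  exact not_finiteIndex_zpowers_of_surjective_int_prod hf g hg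

theorem isCyclic_of_subsingleton_generators [Subsingleton (Generators G)] : IsCyclic G := by
  cases isEmpty_or_nonempty (Generators G) with
  | inl _ =>
    have : Subsingleton G := (toFreeGroup G).injective.subsingleton
    exact isCyclic_of_subsingleton
  | inr h =>
    have : Unique (Generators G) := uniqueOfSubsingleton h.some
    exact isCyclic_of_surjective ((toFreeGroup G).trans FreeGroup.mulEquivIntOfUnique).symm
      (MulEquiv.surjective _)

theorem isCyclic_of_finiteIndex_zpowers (g : G) (hg : (zpowers g).FiniteIndex) : IsCyclic G :=
  have := subsingleton_generators_of_finiteIndex_zpowers g hg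
  isCyclic_of_subsingleton_generators

end IsFreeGroup

/-- If `⟨t⟩` is an infinite cyclic finite-index subgroup of `H` and the normal
closure `N` of `t` in `H` is a free group, then `N` is infinite cyclic and
`N = ⟨t⟩`. -/
theorem stmt_17 {H : Type*} [Group H] (t : H)
    (hinf : ¬ IsOfFinOrder t)
    (hindex : (Subgroup.zpowers t).FiniteIndex)
    (hfree : IsFreeGroup (Subgroup.normalClosure {t})) :
    Subgroup.normalClosure {t} = Subgroup.zpowers t
      ∧ IsCyclic (Subgroup.normalClosure {t})
      ∧ Infinite (Subgroup.normalClosure {t}) := by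
  set N := normalClosure {t}
  have htN : t ∈ N := subset_normalClosure rfl
  have hcyclic : IsCyclic N := IsFreeGroup.isCyclic_of_finiteIndex_zpowers ⟨t, htN⟩
    (FiniteIndex.of_map_subtype (by rwa [MonoidHom.map_zpowers]))
  have : (zpowers t).Normal := normal_of_le_of_isCyclic (zpowers_le.mpr htN)
  have hN : N = zpowers t :=
    le_antisymm (normalClosure_le_normal (by simp)) (zpowers_le.mpr htN)
  refine ⟨hN, hcyclic, ?_⟩
  rw [hN]
  exact (infinite_zpowers.mpr hinf).to_subtype
end
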